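/- arXiv:0906.0563 — 6 statements merged into one kernel-verified Lean document; each statement's English description precedes it below -/
import Mathlib

section
/- Let T be an isometry of a nondegenerate space (V,B) over a field F of characteristic different from 2, with V ≠ 0, and let m ∈ F[X] be the minimal polynomial of T over F. Then m(0) ≠ 0, the identity m(0)·m(X) = X^{deg m}·m(1/X) holds (i.e. m(0)·m equals the reverse of the polynomial m), and T and T⁻¹ have the same minimal polynomial over F. -/
/-!
An isometry `T` of a nondegenerate form is adjoint to `T⁻¹`, hence so are `p(T)` and `p(T⁻¹)`
for every polynomial `p`; nondegeneracy then gives `p(T) = 0 ↔ p(T⁻¹) = 0`, so `T` and `T⁻¹`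
share their minimal polynomial `m`. On the other hand `rev(m)(T⁻¹) · Tᵈ = m(T) = 0` for
`d = deg m`, so `m ∣ rev(m)`; as `deg rev(m) ≤ deg m`, comparing the coefficients of `Xᵈ`
forces `rev(m) = m(0) · m`.
-/

/-- The group of isometries of a bilinear space `(V, B)`, as a subgroup of the
group of linear automorphisms of `V`. -/
def isometryGroup (F : Type*) [Field F] {V : Type*} [AddCommGroup V] [Module F V]
    (B : LinearMap.BilinForm F V) : Subgroup (V ≃ₗ[F] V) where
  carrier := {T | ∀ u v : V, B (T u) (T v) = B u v}
  one_mem' := by intro u v; rfl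
  mul_mem' := by
    intro a b ha hb u v
    have h1 : (a * b) u = a (b u) := rfl
    have h2 : (a * b) v = a (b v) := rfl
    rw [h1, h2, ha, hb]
  inv_mem' := by
    intro a ha u v
    have h := ha (a⁻¹ u) (a⁻¹ v)
    have h1 : a (a⁻¹ u) = u := a.apply_symm_apply u
    have h2 : a (a⁻¹ v) = v := a.apply_symm_apply v
    rw [h1, h2] at h
    exact h.symm


open Polynomial

namespace Polynomial

theorem aeval_units_inv_reflect_mul_pow {R A : Type*} [CommSemiring R] [Ring A] [Algebra R A]
    (u : Aˣ) {N : ℕ} {f : R[X]} (hf : f.natDegree ≤ N) :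
    aeval (↑u⁻¹ : A) (reflect N f) * ↑u ^ N = aeval (u : A) f := by
  refine induction_with_natDegree_le
    (fun f => aeval (↑u⁻¹ : A) (reflect N f) * ↑u ^ N = aeval (u : A) f) N ?_ ?_ ?_ f hf
  · simp
  · intro n r _ hn
    have hcancel : (↑u⁻¹ : A) ^ (N - n) * ↑u ^ N = ↑u ^ n := by
      obtain ⟨k, rfl⟩ := Nat.exists_eq_add_of_le' hn
      rw [Nat.add_sub_cancel, pow_add, ← mul_assoc, ← Units.val_pow_eq_pow_val,
        ← Units.val_pow_eq_pow_val, ← Units.val_mul, inv_pow, inv_mul_cancel, Units.val_one,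
        one_mul]
    rw [reflect_C_mul_X_pow, revAt_le hn, map_mul, map_mul, aeval_C, aeval_C, aeval_X_pow,
      aeval_X_pow, mul_assoc, hcancel]
  · intro f g _ _ hf hg
    rw [reflect_add, map_add, map_add, add_mul, hf, hg]

theorem aeval_units_inv_reverse_mul_pow {R A : Type*} [CommSemiring R] [Ring A] [Algebra R A]
    (u : Aˣ) (f : R[X]) :
    aeval (↑u⁻¹ : A) f.reverse * ↑u ^ f.natDegree = aeval (u : A) f :=
  aeval_units_inv_reflect_mul_pow u le_rfl

theorem Monic.C_eval_zero_mul_eq_reverse_of_dvd {R : Type*} [CommSemiring R] [Nontrivial R]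
    {m : R[X]} (hm : m.Monic) (hdvd : m ∣ m.reverse) : C (m.eval 0) * m = m.reverse := by
  obtain ⟨q, hq⟩ := hdvd
  have hq0 : q ≠ 0 := by
    rintro rfl
    exact hm.ne_zero (reverse_eq_zero.1 (by rw [hq, mul_zero]))
  obtain ⟨c, rfl⟩ : ∃ c, q = C c := by
    refine ⟨_, eq_C_of_natDegree_eq_zero ?_⟩
    have := m.reverse_natDegree_le
    rw [hq, hm.natDegree_mul' hq0] at this
    omega
  have hc : c = m.coeff 0 := by
    have := congrArg (coeff · m.natDegree) hq
    simp only [coeff_reverse, revAt_le le_rfl, Nat.sub_self, coeff_mul_C, hm.coeff_natDegree,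
      one_mul] at this
    exact this.symm
  rw [hq, mul_comm, hc, coeff_zero_eq_eval_zero]

end Polynomial

namespace minpoly

theorem units_inv_dvd_reverse (A : Type*) {B : Type*} [Field A] [Ring B] [Algebra A B]
    (u : Bˣ) : minpoly A (↑u⁻¹ : B) ∣ (minpoly A (u : B)).reverse := by
  refine minpoly.dvd_iff.2 ((u ^ (minpoly A (u : B)).natDegree).mul_left_eq_zero.1 ?_)
  rw [Units.val_pow_eq_pow_val, aeval_units_inv_reverse_mul_pow, minpoly.aeval]

theorem eq_of_forall_aeval_eq_zero_iff {A B : Type*} [Field A] [Ring B] [Algebra A B]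
    {x y : B} (h : ∀ p : A[X], Polynomial.aeval x p = 0 ↔ Polynomial.aeval y p = 0) :
    minpoly A x = minpoly A y := by
  by_cases hx : IsIntegral A x
  · have hy : IsIntegral A y := ⟨minpoly A x, minpoly.monic hx, (h _).1 (minpoly.aeval A x)⟩
    refine eq_of_monic_of_associated (minpoly.monic hx) (minpoly.monic hy)
      (associated_of_dvd_dvd ?_ ?_)
    · exact minpoly.dvd_iff.2 ((h _).2 (minpoly.aeval A y))
    · exact minpoly.dvd_iff.2 ((h _).1 (minpoly.aeval A x))
  · have hy : ¬IsIntegral A y := fun ⟨p, hp, hpy⟩ => hx ⟨p, hp, (h p).2 hpy⟩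
    rw [minpoly.eq_zero hx, minpoly.eq_zero hy]

end minpoly

namespace LinearMap

variable {R M M₂ : Type*} [CommRing R] [AddCommGroup M] [Module R M] [AddCommGroup M₂]
  [Module R M₂] {B : M →ₗ[R] M →ₗ[R] M₂} {f g : Module.End R M}

theorem IsAdjointPair.pow (h : IsAdjointPair B B f g) (n : ℕ) :
    IsAdjointPair B B ⇑(f ^ n) ⇑(g ^ n) := by
  induction n with
  | zero => exact isAdjointPair_one
  | succ n ih => rw [pow_succ, pow_succ']; exact ih.mul h

theorem IsAdjointPair.aeval (h : IsAdjointPair B B f g) (p : R[X]) :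
    IsAdjointPair B B ⇑(aeval f p) ⇑(aeval g p) := by
  induction p using Polynomial.induction_on' with
  | add p q hp hq => rw [map_add, map_add]; exact hp.add hq
  | monomial n a =>
    rw [aeval_monomial, aeval_monomial, ← Algebra.smul_def, ← Algebra.smul_def]
    exact (h.pow n).smul a

theorem IsAdjointPair.eq_zero_iff (hB : B.Nondegenerate) (h : IsAdjointPair B B f g) :
    f = 0 ↔ g = 0 := by
  constructor
  · rintro rfl
    ext y
    exact hB.2 _ fun x => by rw [← h, zero_apply, map_zero, zero_apply]
  · rintro rfl
    ext x
    exact hB.1 _ fun y => by rw [h, zero_apply, map_zero]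

theorem IsAdjointPair.minpoly_eq {K M M₂ : Type*} [Field K] [AddCommGroup M] [Module K M]
    [AddCommGroup M₂] [Module K M₂] {B : M →ₗ[K] M →ₗ[K] M₂} {f g : Module.End K M}
    (hB : B.Nondegenerate) (h : IsAdjointPair B B f g) : minpoly K f = minpoly K g :=
  minpoly.eq_of_forall_aeval_eq_zero_iff fun p => (h.aeval p).eq_zero_iff hB

end LinearMap

theorem minpoly_isometry_self_dual_general
    (F : Type*) [Field F]
    (V : Type*) [AddCommGroup V] [Module F V] [FiniteDimensional F V]
    (B : LinearMap.BilinForm F V) (hnd : B.Nondegenerate)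
    (T : V ≃ₗ[F] V) (hT : T ∈ isometryGroup F B)
    (m : Polynomial F) (hm : m = minpoly F ((T : V →ₗ[F] V) : Module.End F V)) :
    m.eval 0 ≠ 0 ∧
    Polynomial.C (m.eval 0) * m = m.reverse ∧
    minpoly F ((T.symm : V →ₗ[F] V) : Module.End F V) = m := by
  have hinv : minpoly F ((T.symm : V →ₗ[F] V) : Module.End F V) = m :=
    hm ▸ (((LinearEquiv.isAdjointPair_symm_iff (f := T.toEquiv)).2 hT).minpoly_eq hnd).symm
  have hdvd : m ∣ m.reverse := by
    have h : minpoly F ((T.symm : V →ₗ[F] V) : Module.End F V) ∣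
        (minpoly F (T : V →ₗ[F] V)).reverse :=
      minpoly.units_inv_dvd_reverse F ((LinearMap.GeneralLinearGroup.generalLinearEquiv F V).symm T)
    rwa [hinv, ← hm] at h
  have hmonic : m.Monic := hm ▸ minpoly.monic (Algebra.IsIntegral.isIntegral _)
  have hself := hmonic.C_eval_zero_mul_eq_reverse_of_dvd hdvd
  refine ⟨fun h0 => hmonic.ne_zero (reverse_eq_zero.1 ?_), hself, hinv⟩
  rw [← hself, h0, C_0, zero_mul]

/-- The minimal polynomial `m` of an isometry of a nonzero nondegenerate space
satisfies `m(0) ≠ 0` and `m(0) · m(X) = X^(deg m) · m(1/X)` (i.e. `m(0) · m` is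
the reverse of `m`); in other words `m` is self-dual.  Moreover `T` and `T⁻¹`
have the same minimal polynomial. -/
theorem minpoly_isometry_self_dual
    (F : Type*) [Field F] (hchar : ringChar F ≠ 2)
    (V : Type*) [AddCommGroup V] [Module F V] [FiniteDimensional F V] [Nontrivial V]
    (B : LinearMap.BilinForm F V) (hB : B.IsSymm ∨ B.IsAlt) (hnd : B.Nondegenerate)
    (T : V ≃ₗ[F] V) (hT : T ∈ isometryGroup F B)
    (m : Polynomial F) (hm : m = minpoly F ((T : V →ₗ[F] V) : Module.End F V)) :
    m.eval 0 ≠ 0 ∧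
    Polynomial.C (m.eval 0) * m = m.reverse ∧
    minpoly F ((T.symm : V →ₗ[F] V) : Module.End F V) = m :=
  minpoly_isometry_self_dual_general F V B hnd T hT m hm
end

section
/- Let T be an isometry of a nondegenerate space (V,B) over a field F of characteristic different from 2. Let p, q ∈ F[X] be monic irreducible polynomials with p(0) ≠ 0 and q(0) ≠ 0, and suppose q is not equal to the dual polynomial p* of p. Then for all positive integers a, b, every u ∈ ker p(T)^a and every v ∈ ker q(T)^b satisfy B(u,v) = 0. -/
open Polynomial

/-- The dual of a polynomial `f` (with `f(0) ≠ 0`): `f*(X) = f(0)⁻¹ · Xⁿ · f(1/X)`,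
i.e. `f(0)⁻¹` times the reverse of `f`. -/
noncomputable def dualPoly {F : Type*} [Field F] (f : Polynomial F) : Polynomial F :=
  Polynomial.C ((f.eval 0)⁻¹) * f.reverse

lemma rev_rev {F : Type*} [Field F] (f : Polynomial F) (h0 : f.coeff 0 ≠ 0) :
    f.reverse.reverse = f := by
  have ht : f.natTrailingDegree = 0 := natTrailingDegree_eq_zero.mpr (Or.inr h0)
  have hn : f.reverse.natDegree = f.natDegree := by
    rw [reverse_natDegree, ht, tsub_zero]
  ext i
  rw [coeff_reverse, hn, coeff_reverse, revAt_invol]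

lemma rev_irred {F : Type*} [Field F] (f : Polynomial F) (h0 : f.coeff 0 ≠ 0)
    (hf : Irreducible f) : Irreducible f.reverse := by
  have hfne : f ≠ 0 := fun h => h0 (by simp [h])
  have ht : f.natTrailingDegree = 0 := natTrailingDegree_eq_zero.mpr (Or.inr h0)
  have hdeg : f.reverse.natDegree = f.natDegree := by rw [reverse_natDegree, ht, tsub_zero]
  constructor
  · intro hu
    have h := natDegree_eq_zero_of_isUnit hu
    rw [hdeg] at h
    exact hf.natDegree_pos.ne' h
  · intro g h hgh
    by_contra hc
    push_neg at hc
    obtain ⟨hg, hh⟩ := hc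
    have hrevne : f.reverse ≠ 0 := fun hz => hfne (reverse_eq_zero.mp hz)
    have h00 : g.coeff 0 * h.coeff 0 ≠ 0 := by
      rw [← mul_coeff_zero, ← hgh, coeff_zero_reverse]
      exact leadingCoeff_ne_zero.mpr hfne
    have hg0 : g.coeff 0 ≠ 0 := fun hz => h00 (by rw [hz, zero_mul])
    have hh0 : h.coeff 0 ≠ 0 := fun hz => h00 (by rw [hz, mul_zero])
    have hfac : f = g.reverse * h.reverse := by
      rw [← reverse_mul_of_domain, ← hgh, rev_rev f h0]
    rcases hf.isUnit_or_isUnit hfac with hu | hu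
    · have hd : g.natDegree = 0 := by
        have := natDegree_eq_zero_of_isUnit hu
        rwa [reverse_natDegree, natTrailingDegree_eq_zero.mpr (Or.inr hg0), tsub_zero] at this
      obtain ⟨a, ha⟩ := natDegree_eq_zero.mp hd
      have ha0 : a ≠ 0 := by
        intro h'; rw [h'] at ha
        exact hg0 (by rw [← ha]; simp)
      exact hg (ha ▸ isUnit_C.mpr (isUnit_iff_ne_zero.mpr ha0))
    · have hd : h.natDegree = 0 := by
        have := natDegree_eq_zero_of_isUnit hu
        rwa [reverse_natDegree, natTrailingDegree_eq_zero.mpr (Or.inr hh0), tsub_zero] at this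
      obtain ⟨a, ha⟩ := natDegree_eq_zero.mp hd
      have ha0 : a ≠ 0 := by
        intro h'; rw [h'] at ha
        exact hh0 (by rw [← ha]; simp)
      exact hh (ha ▸ isUnit_C.mpr (isUnit_iff_ne_zero.mpr ha0))

section
variable {F : Type*} [Field F] {V : Type*} [AddCommGroup V] [Module F V]

lemma rev_aeval (S S' : Module.End F V) (h1 : S * S' = 1) (h2 : S' * S = 1)
    (f : Polynomial F) :
    (aeval S' f.reverse : Module.End F V) = S' ^ f.natDegree * aeval S f := by
  have hcomm : Commute S' S := h2.trans h1.symm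
  have hcancel : ∀ k, S' ^ k * S ^ k = 1 := by
    intro k
    rw [← hcomm.mul_pow, h2, one_pow]
  set n := f.natDegree with hn
  have hlt : f.reverse.natDegree < n + 1 := Nat.lt_succ_of_le f.reverse_natDegree_le
  rw [aeval_eq_sum_range' hlt, aeval_eq_sum_range, Finset.mul_sum]
  have step1 : ∀ i ∈ Finset.range (n + 1),
      f.reverse.coeff i • S' ^ i = f.coeff (n - i) • (S' ^ n * S ^ (n - i)) := by
    intro i hi
    have hi' : i ≤ n := Nat.lt_succ_iff.mp (Finset.mem_range.mp hi)
    have hS : S' ^ n * S ^ (n - i) = S' ^ i := by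
      have : S' ^ n = S' ^ i * S' ^ (n - i) := by
        rw [← pow_add, Nat.add_sub_cancel' hi']
      rw [this, mul_assoc, hcancel (n - i), mul_one]
    rw [coeff_reverse, revAt_le hi', hS, hn]
  rw [Finset.sum_congr rfl step1]
  have := Finset.sum_range_reflect (fun j => f.coeff j • (S' ^ n * S ^ j)) (n + 1)
  simp only [Nat.add_sub_cancel] at this
  rw [this]
  exact Finset.sum_congr rfl fun j _ => (mul_smul_comm _ _ _).symm

end

/-- If `p` and `q` are monic irreducible polynomials (not vanishing at `0`) and
`q` is not the dual of `p`, then for an isometry `T` the generalized kernels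
`ker p(T)^a` and `ker q(T)^b` are orthogonal with respect to `B`. -/
theorem primary_components_orthogonal
    (F : Type*) [Field F] (hchar : ringChar F ≠ 2)
    (V : Type*) [AddCommGroup V] [Module F V] [FiniteDimensional F V]
    (B : LinearMap.BilinForm F V) (hB : B.IsSymm ∨ B.IsAlt) (hnd : B.Nondegenerate)
    (T : V ≃ₗ[F] V) (hT : T ∈ isometryGroup F B)
    (p q : Polynomial F) (hpm : p.Monic) (hqm : q.Monic)
    (hpi : Irreducible p) (hqi : Irreducible q)
    (hp0 : p.eval 0 ≠ 0) (hq0 : q.eval 0 ≠ 0)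
    (hne : q ≠ dualPoly p) :
    ∀ a b : ℕ, 0 < a → 0 < b →
      ∀ u ∈ LinearMap.ker ((Polynomial.aeval ((T : V →ₗ[F] V) : Module.End F V) p) ^ a),
      ∀ v ∈ LinearMap.ker ((Polynomial.aeval ((T : V →ₗ[F] V) : Module.End F V) q) ^ b),
        B u v = 0 := by
  have hT : ∀ u v : V, B (T u) (T v) = B u v := hT
  intro a b ha hb u hu v hv
  set S : Module.End F V := ((T : V →ₗ[F] V) : Module.End F V) with hS
  set S' : Module.End F V := ((T.symm : V →ₗ[F] V) : Module.End F V) with hS'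
  have h1 : S * S' = 1 := LinearMap.ext fun x => T.apply_symm_apply x
  have h2 : S' * S = 1 := LinearMap.ext fun x => T.symm_apply_apply x
  have hcomm : Commute S' S := h2.trans h1.symm
  -- adjoint step
  have hstep : ∀ x y : V, B x (S y) = B (S' x) y := by
    intro x y
    have := hT (T.symm x) y
    rwa [T.apply_symm_apply] at this
  have hpow : ∀ (k : ℕ) (x y : V), B x ((S ^ k) y) = B ((S' ^ k) x) y := by
    intro k
    induction k with
    | zero => intro x y; simp
    | succ k ih =>
      intro x y
      have e1 : (S ^ (k+1)) y = (S ^ k) (S y) := by rw [pow_succ]; rfl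
      have e2 : (S' ^ (k+1)) x = (S' ^ k) (S' x) := by rw [pow_succ]; rfl
      have e3 : S' ((S' ^ k) x) = (S' ^ k) (S' x) := by
        rw [← Module.End.mul_apply, ← Module.End.mul_apply, ((Commute.refl S').pow_right k).eq]
      rw [e1, e2, ih x (S y), hstep, e3]
  have hadj : ∀ (f : Polynomial F) (x y : V), B x ((aeval S f) y) = B ((aeval S' f) x) y := by
    intro f
    induction f using Polynomial.induction_on' with
    | add r s hr hs =>
      intro x y
      simp only [map_add, LinearMap.add_apply, hr, hs]
    | monomial k c =>
      intro x y
      rw [aeval_monomial, aeval_monomial]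
      simp only [Module.End.mul_apply, Module.algebraMap_end_apply, map_smul,
        LinearMap.smul_apply]
      rw [hpow]
  have hne' : q ≠ Polynomial.C ((p.eval 0)⁻¹) * p.reverse := hne
  set P : Polynomial F := Polynomial.C ((p.eval 0)⁻¹) * p.reverse with hP
  have hp0' : p.coeff 0 ≠ 0 := by rwa [coeff_zero_eq_eval_zero]
  have hntd : p.natTrailingDegree = 0 := natTrailingDegree_eq_zero.mpr (Or.inr hp0')
  have hPmonic : P.Monic := by
    unfold Polynomial.Monic
    rw [hP, leadingCoeff_mul, leadingCoeff_C, reverse_leadingCoeff, trailingCoeff, hntd,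
      coeff_zero_eq_eval_zero, inv_mul_cancel₀ hp0]
  have hPirr : Irreducible P := by
    have hu : IsUnit (Polynomial.C ((p.eval 0)⁻¹)) :=
      isUnit_C.mpr (isUnit_iff_ne_zero.mpr (inv_ne_zero hp0))
    have hassoc : Associated p.reverse P := ⟨hu.unit, by rw [IsUnit.unit_spec, hP, mul_comm]⟩
    exact hassoc.irreducible (rev_irred p hp0' hpi)
  have hcop : IsCoprime (q ^ b) (P ^ a) := by
    have hqP : IsCoprime q P := hqi.coprime_iff_not_dvd.mpr (fun hdvd =>
      hne' (eq_of_monic_of_associated hqm hPmonic (hqi.associated_of_dvd hPirr hdvd)))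
    exact hqP.pow
  obtain ⟨f, g, hfg⟩ := hcop
  have hv0 : (aeval S (q ^ b)) v = 0 := by rw [map_pow]; exact LinearMap.mem_ker.mp hv
  have hvdec : v = (aeval S (P ^ a)) ((aeval S g) v) := by
    have e : (aeval S (g * P ^ a) : Module.End F V) = aeval S (P ^ a) * aeval S g := by
      rw [mul_comm g, map_mul]
    calc v = (aeval S (f * q ^ b + g * P ^ a)) v := by rw [hfg, map_one]; rfl
    _ = (aeval S f) ((aeval S (q ^ b)) v) + (aeval S (P ^ a)) ((aeval S g) v) := by
        rw [map_add, LinearMap.add_apply, map_mul, e]; rfl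
    _ = (aeval S (P ^ a)) ((aeval S g) v) := by rw [hv0, map_zero, zero_add]
  have hker : (aeval S' (P ^ a)) u = 0 := by
    have hrev : (aeval S' p.reverse : Module.End F V) = S' ^ p.natDegree * aeval S p :=
      rev_aeval S S' h1 h2 p
    have hP' : (aeval S' P : Module.End F V)
        = ((p.eval 0)⁻¹) • (S' ^ p.natDegree * aeval S p) := by
      rw [hP, map_mul, aeval_C, hrev, ← Algebra.smul_def]
    have hcomm2 : Commute (S' ^ p.natDegree) (aeval S p : Module.End F V) := by
      apply Commute.pow_left
      rw [aeval_eq_sum_range]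
      exact Commute.sum_right _ _ _ (fun i _ => ((hcomm.pow_right i).smul_right _))
    have hfin : (aeval S' (P ^ a) : Module.End F V)
        = ((p.eval 0)⁻¹) ^ a • ((S' ^ p.natDegree) ^ a * (aeval S p) ^ a) := by
      rw [map_pow, hP', _root_.smul_pow, hcomm2.mul_pow]
    rw [hfin]
    have hu0 : ((aeval S p : Module.End F V) ^ a) u = 0 := LinearMap.mem_ker.mp hu
    simp [LinearMap.smul_apply, Module.End.mul_apply, hu0]
  rw [hvdec, hadj, hker]
  simp
end

section
/- Let F be a field of characteristic different from 2, p ∈ F[X] a monic irreducible polynomial, d ≥ 1 an integer, and E = F[X]/(p^d). Then: (i) there exists an F-linear map h : E → F such that the symmetric F-bilinear form (a,b) ↦ h(ab) on E is nondegenerate; (ii) if moreover p is self-dual and p ∉ {X − 1, X + 1} (so that the class t of X is a unit of E and there is a unique F-algebra automorphism σ of E with σ(t) = t⁻¹), then h can be chosen so that in addition h ∘ σ = h. -/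
open Polynomial

/-- A linear functional not vanishing at a given nonzero element of `AdjoinRoot q`. -/
lemma exists_functional {F : Type*} [Field F] {q : Polynomial F} (hq : q.Monic)
    (v : AdjoinRoot q) (hv : v ≠ 0) :
    ∃ g : AdjoinRoot q →ₗ[F] F, g v ≠ 0 := by
  set r : Polynomial F := AdjoinRoot.modByMonicHom hq v with hr
  have hrne : r ≠ 0 := by
    intro h0
    apply hv
    have := AdjoinRoot.mk_leftInverse hq v
    rw [← this, ← hr, h0, map_zero]
  refine ⟨(Polynomial.lcoeff F r.natDegree).comp (AdjoinRoot.modByMonicHom hq), ?_⟩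
  simpa [← hr, Polynomial.lcoeff_apply] using
    (Polynomial.leadingCoeff_ne_zero.mpr hrne)

/-- Every nonzero element of `F[X]/(p^d)` divides the class of `p^(d-1)`. -/
lemma exists_mul_eq_sOne {F : Type*} [Field F] {p : Polynomial F}
    (hpi : Irreducible p) {d : ℕ} (hd : 1 ≤ d)
    (a : AdjoinRoot (p ^ d)) (ha : a ≠ 0) :
    ∃ b : AdjoinRoot (p ^ d), a * b = AdjoinRoot.mk (p ^ d) (p ^ (d - 1)) := by
  classical
  obtain ⟨g, rfl⟩ := AdjoinRoot.mk_surjective a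
  have hnd : ¬ (p ^ d ∣ g) := fun h => ha (AdjoinRoot.mk_eq_zero.mpr h)
  -- gcd of g and p^d
  set e := EuclideanDomain.gcd g (p ^ d) with he
  have hedvd : e ∣ p ^ d := EuclideanDomain.gcd_dvd_right g (p ^ d)
  obtain ⟨k, hk, hke⟩ := (dvd_prime_pow hpi.prime d).1 hedvd
  have hkd : k ≤ d - 1 := by
    rcases Nat.lt_or_ge k d with h | h
    · omega
    · exfalso
      have hkdd : k = d := le_antisymm hk h
      have h2 : p ^ d ∣ e := hkdd ▸ hke.symm.dvd
      exact hnd (h2.trans (EuclideanDomain.gcd_dvd_left g (p ^ d)))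
  have hedvd' : e ∣ p ^ (d - 1) :=
    dvd_trans hke.dvd (pow_dvd_pow p hkd)
  obtain ⟨w, hw⟩ := hedvd'
  have hbezout : (e : Polynomial F) = g * EuclideanDomain.gcdA g (p ^ d) +
      (p ^ d) * EuclideanDomain.gcdB g (p ^ d) := EuclideanDomain.gcd_eq_gcd_ab g (p ^ d)
  refine ⟨AdjoinRoot.mk (p ^ d) (EuclideanDomain.gcdA g (p ^ d) * w), ?_⟩
  rw [← map_mul, AdjoinRoot.mk_eq_mk]
  exact ⟨-(EuclideanDomain.gcdB g (p ^ d) * w), by rw [hw, hbezout]; ring⟩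

/-- On the cyclic algebra `E = F[X]/(p^d)` (`p` monic irreducible, `d ≥ 1`) there
is an `F`-linear functional `h : E → F` whose multiplication form
`(a, b) ↦ h(ab)` is nondegenerate; and if `p` is self-dual and different from
`X - 1` and `X + 1`, then for the (unique) `F`-algebra automorphism `σ` of `E`
sending the class `t` of `X` to `t⁻¹`, such an `h` can be chosen to satisfy
`h ∘ σ = h` as well. -/
theorem exists_nondegenerate_trace_functional
    (F : Type*) [Field F] (hchar : ringChar F ≠ 2)
    (p : Polynomial F) (hpm : p.Monic) (hpi : Irreducible p)
    (d : ℕ) (hd : 1 ≤ d) :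
    (∃ h : AdjoinRoot (p ^ d) →ₗ[F] F,
      ∀ a : AdjoinRoot (p ^ d), (∀ b : AdjoinRoot (p ^ d), h (a * b) = 0) → a = 0) ∧
    ((dualPoly p = p ∧ p ≠ Polynomial.X - 1 ∧ p ≠ Polynomial.X + 1) →
      ∀ σ : AdjoinRoot (p ^ d) ≃ₐ[F] AdjoinRoot (p ^ d),
        σ (AdjoinRoot.root (p ^ d)) * AdjoinRoot.root (p ^ d) = 1 →
        ∃ h : AdjoinRoot (p ^ d) →ₗ[F] F,
          (∀ a : AdjoinRoot (p ^ d),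
            (∀ b : AdjoinRoot (p ^ d), h (a * b) = 0) → a = 0) ∧
          ∀ e : AdjoinRoot (p ^ d), h (σ e) = h e) := by
  have hqm : (p ^ d).Monic := hpm.pow d
  set s₀ : AdjoinRoot (p ^ d) := AdjoinRoot.mk (p ^ d) (p ^ (d - 1)) with hs₀
  have hpne : p ≠ 0 := hpi.ne_zero
  have hs₀ne : s₀ ≠ 0 := by
    rw [hs₀, Ne, AdjoinRoot.mk_eq_zero]
    rw [pow_dvd_pow_iff hpne hpi.not_isUnit]
    omega
  constructor
  · -- part (i)
    obtain ⟨g, hg⟩ := exists_functional hqm s₀ hs₀ne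
    refine ⟨g, fun a ha => ?_⟩
    by_contra hane
    obtain ⟨b, hb⟩ := exists_mul_eq_sOne hpi hd a hane
    exact hg (by rw [← hs₀] at hb; rw [← hb]; exact ha b)
  · -- part (ii)
    rintro ⟨-, hp1, hp2⟩ σ hσ
    -- σ is an involution
    have hσ2 : ∀ e : AdjoinRoot (p ^ d), σ (σ e) = e := by
      have hroot : σ (σ (AdjoinRoot.root (p ^ d))) = AdjoinRoot.root (p ^ d) := by
        have h2 : σ (σ (AdjoinRoot.root (p ^ d))) * σ (AdjoinRoot.root (p ^ d)) = 1 := by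
          rw [← map_mul, hσ, map_one]
        calc σ (σ (AdjoinRoot.root (p ^ d)))
            = σ (σ (AdjoinRoot.root (p ^ d))) *
              (σ (AdjoinRoot.root (p ^ d)) * AdjoinRoot.root (p ^ d)) := by rw [hσ, mul_one]
          _ = (σ (σ (AdjoinRoot.root (p ^ d))) * σ (AdjoinRoot.root (p ^ d))) *
              AdjoinRoot.root (p ^ d) := by ring
          _ = AdjoinRoot.root (p ^ d) := by rw [h2, one_mul]
      have : (σ.toAlgHom.comp σ.toAlgHom) = AlgHom.id F (AdjoinRoot (p ^ d)) := by
        apply AdjoinRoot.algHom_ext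
        simpa using hroot
      intro e
      have := congrArg (fun f => f e) (congrArg (fun f => f.toFun) this)
      simpa using this
    set t : AdjoinRoot (p ^ d) := AdjoinRoot.root (p ^ d) with ht
    -- key: t^2 * s₀ ≠ s₀
    have hkey : t ^ 2 * s₀ ≠ s₀ := by
      intro hcontra
      have hdvd : p ^ d ∣ (Polynomial.X ^ 2 * p ^ (d - 1) - p ^ (d - 1)) := by
        rw [← AdjoinRoot.mk_eq_zero]
        rw [map_sub, map_mul, map_pow, AdjoinRoot.mk_X]
        rw [← ht, ← hs₀]
        rw [hcontra]
        ring
      have hdvd2 : p ^ d ∣ p ^ (d - 1) * (Polynomial.X ^ 2 - 1) := by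
        convert hdvd using 1; ring
      have hdd : d = (d - 1) + 1 := by omega
      rw [hdd, pow_succ] at hdvd2
      have hpd1ne : p ^ (d - 1) ≠ 0 := pow_ne_zero _ hpne
      have hpdvd : p ∣ (Polynomial.X ^ 2 - 1) :=
        (mul_dvd_mul_iff_left hpd1ne).mp hdvd2
      have hfact : (Polynomial.X ^ 2 - 1 : Polynomial F)
          = (Polynomial.X - 1) * (Polynomial.X + 1) := by ring
      rw [hfact] at hpdvd
      rcases hpi.prime.2.2 _ _ hpdvd with h | h
      · apply hp1
        have hXm : (Polynomial.X - 1 : Polynomial F).Monic := by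
          simpa using Polynomial.monic_X_sub_C (1 : F)
        have hXi : Irreducible (Polynomial.X - 1 : Polynomial F) := by
          simpa using Polynomial.irreducible_X_sub_C (1 : F)
        exact Polynomial.eq_of_monic_of_associated hpm hXm (hpi.associated_of_dvd hXi h)
      · apply hp2
        have hXm : (Polynomial.X + 1 : Polynomial F).Monic := by
          have := Polynomial.monic_X_sub_C (-1 : F)
          simpa [sub_neg_eq_add] using this
        have hXi : Irreducible (Polynomial.X + 1 : Polynomial F) := by
          have := Polynomial.irreducible_X_sub_C (-1 : F)
          simpa [sub_neg_eq_add] using this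
        exact Polynomial.eq_of_monic_of_associated hpm hXm (hpi.associated_of_dvd hXi h)
    -- find c with c*s₀ + σ(c*s₀) ≠ 0
    have hexc : ∃ c : AdjoinRoot (p ^ d), c * s₀ + σ (c * s₀) ≠ 0 := by
      by_cases h1 : s₀ + σ s₀ ≠ 0
      · exact ⟨1, by simpa using h1⟩
      · push_neg at h1
        have hσs₀ : σ s₀ = -s₀ := by linear_combination h1
        refine ⟨t, fun hcontra => ?_⟩
        have hσt : σ (t * s₀) = - (σ t * s₀) := by
          rw [map_mul, hσs₀]; ring
        rw [hσt] at hcontra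
        have : σ t * s₀ = t * s₀ := by linear_combination -hcontra
        apply hkey
        calc t ^ 2 * s₀ = t * (t * s₀) := by ring
          _ = t * (σ t * s₀) := by rw [this]
          _ = (σ t * t) * s₀ := by ring
          _ = s₀ := by rw [hσ, one_mul]
    obtain ⟨c, hc⟩ := hexc
    obtain ⟨g, hg⟩ := exists_functional hqm (c * s₀ + σ (c * s₀)) hc
    refine ⟨g + g.comp σ.toLinearMap, fun a ha => ?_, fun e => ?_⟩
    · by_contra hane
      obtain ⟨b, hb⟩ := exists_mul_eq_sOne hpi hd a hane
      have := ha (b * c)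
      rw [← mul_assoc, hb, ← hs₀] at this
      apply hg
      have hsc : AdjoinRoot.mk (p ^ d) (p ^ (d - 1)) * c = c * s₀ := by
        rw [← hs₀]; ring
      rw [hsc] at this
      simpa [map_add] using this
    · simp only [LinearMap.add_apply, LinearMap.comp_apply, AlgEquiv.toLinearMap_apply, hσ2]
      ring
end

section
/- Let F be a field of characteristic different from 2, (V,B) a finite-dimensional F-vector space with a nondegenerate symmetric bilinear form, and T an isometry of (V,B) whose minimal polynomial p is monic, irreducible, self-dual, and different from X − 1 and X + 1. Set E = F[X]/(p) (a field extension of F), regard V as an E-vector space via [f]·v = f(T)(v), let σ be the unique F-algebra automorphism of E with σ(t) = t⁻¹ where t is the class of X, and let h : E → F be an F-linear map such that (a,b) ↦ h(ab) is nondegenerate on E and h ∘ σ = h. Then there exists a unique map H : V × V → E such that H is additive in its first variable, H(e·u, v) = e·H(u,v) for all e ∈ E and u,v ∈ V, and h(H(u,v)) = B(u,v) for all u,v ∈ V; moreover this H satisfies H(v,u) = σ(H(u,v)) for all u,v ∈ V, so H is a σ-hermitian form on the E-vector space V. -/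
open Polynomial

/-! Because `(a, b) ↦ h (a * b)` is a perfect pairing on the finite-dimensional algebra `E`, every
`F`-linear functional on `E` is `e ↦ h (e * a)` for a unique `a`; taking the functional
`e ↦ B (e • u) v` defines `H u v`, and the same nondegeneracy gives additivity, `E`-linearity and
uniqueness. Since `T` is an isometry and `σ t = t⁻¹`, the action of `σ t` is the `B`-adjoint of the
action of `t`; as `t` generates `E`, this holds for every `e`, and together with the symmetry of `B`
and `h ∘ σ = h` it yields `H v u = σ (H u v)`. -/

section InducedForm

variable {F E V : Type*} [Field F] [CommRing E] [Algebra F E] [AddCommGroup V] [Module F V]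

def mulForm (h : E →ₗ[F] F) : LinearMap.BilinForm F E :=
  (LinearMap.mul F E).compr₂ h

@[simp]
theorem mulForm_apply (h : E →ₗ[F] F) (a b : E) : mulForm h a b = h (a * b) := rfl

theorem mulForm_nondegenerate {h : E →ₗ[F] F}
    (hh : ∀ a : E, (∀ b : E, h (a * b) = 0) → a = 0) : (mulForm h).Nondegenerate :=
  ⟨hh, fun b hb => hh b fun a => by simpa [mul_comm] using hb a⟩

theorem eq_of_forall_apply_mul_eq {h : E →ₗ[F] F} (hh : (mulForm h).Nondegenerate) {a b : E}
    (hab : ∀ e, h (e * a) = h (e * b)) : a = b :=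
  sub_eq_zero.mp <| hh.2 _ fun e => by simp [mul_sub, hab]

variable [FiniteDimensional F E] {h : E →ₗ[F] F} (hh : (mulForm h).Nondegenerate)
  (ρ : E →ₐ[F] Module.End F V) (B : LinearMap.BilinForm F V)

noncomputable def inducedForm (u v : V) : E :=
  ((mulForm h).toDual hh).symm (B.flip v ∘ₗ LinearMap.applyₗ u ∘ₗ ρ.toLinearMap)

theorem apply_mul_inducedForm (e : E) (u v : V) :
    h (e * inducedForm hh ρ B u v) = B (ρ e u) v := by
  rw [mul_comm, ← mulForm_apply, inducedForm, LinearMap.BilinForm.apply_toDual_symm_apply]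
  rfl

theorem apply_inducedForm (u v : V) : h (inducedForm hh ρ B u v) = B u v := by
  simpa using apply_mul_inducedForm hh ρ B 1 u v

theorem inducedForm_add_left (u u' v : V) :
    inducedForm hh ρ B (u + u') v = inducedForm hh ρ B u v + inducedForm hh ρ B u' v :=
  eq_of_forall_apply_mul_eq hh fun e => by simp [mul_add, apply_mul_inducedForm]

theorem inducedForm_map_left (e : E) (u v : V) :
    inducedForm hh ρ B (ρ e u) v = e * inducedForm hh ρ B u v :=
  eq_of_forall_apply_mul_eq hh fun e' => by
    rw [← mul_assoc, apply_mul_inducedForm, apply_mul_inducedForm, map_mul, Module.End.mul_apply]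

theorem eq_inducedForm {H : V → V → E} (hmap : ∀ e u v, H (ρ e u) v = e * H u v)
    (hB : ∀ u v, h (H u v) = B u v) : H = inducedForm hh ρ B := by
  funext u v
  exact eq_of_forall_apply_mul_eq hh fun e => by rw [← hmap, hB, apply_mul_inducedForm]

theorem inducedForm_swap (σ : E ≃ₐ[F] E) (hσ : ∀ e, h (σ e) = h e) (hsymm : B.IsSymm)
    (hadj : ∀ e, B.IsAdjointPair B (ρ (σ e)) (ρ e)) (u v : V) :
    inducedForm hh ρ B v u = σ (inducedForm hh ρ B u v) :=
  eq_of_forall_apply_mul_eq hh fun e => calc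
    h (e * inducedForm hh ρ B v u) = B (ρ e v) u := apply_mul_inducedForm ..
    _ = B (ρ (σ.symm e) u) v := by rw [hsymm.eq (ρ _ u), ← hadj, σ.apply_symm_apply]
    _ = h (σ (σ.symm e * inducedForm hh ρ B u v)) := by rw [hσ, apply_mul_inducedForm]
    _ = h (e * σ (inducedForm hh ρ B u v)) := by rw [map_mul, σ.apply_symm_apply]

end InducedForm

theorem isAdjointPair_of_isometry {R E V : Type*} [CommRing R] [CommRing E] [Algebra R E]
    [AddCommGroup V] [Module R V] (ρ : E →ₐ[R] Module.End R V) (B : LinearMap.BilinForm R V)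
    (σ : E →ₐ[R] E) {x : E} (hx : Algebra.adjoin R {x} = ⊤) (hσx : σ x * x = 1)
    (hiso : ∀ u v, B (ρ x u) (ρ x v) = B u v) (e : E) :
    B.IsAdjointPair B (ρ (σ e)) (ρ e) := by
  have he : e ∈ Algebra.adjoin R {x} := hx ▸ Algebra.mem_top
  induction he using Algebra.adjoin_induction with
  | mem y hy =>
    obtain rfl := Set.mem_singleton_iff.mp hy
    intro u v
    rw [← hiso, ← Module.End.mul_apply, ← map_mul, mul_comm, hσx, map_one, Module.End.one_apply]
  | algebraMap r => intro u v; simp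
  | add a b _ _ ha hb => intro u v; simp [ha u v, hb u v]
  | mul a b _ _ ha hb =>
    intro u v
    rw [map_mul, map_mul, Module.End.mul_apply, ha, hb, mul_comm, map_mul, Module.End.mul_apply]

theorem exists_unique_induced_hermitian_form_general
    (F : Type*) [Field F]
    (V : Type*) [AddCommGroup V] [Module F V]
    (B : LinearMap.BilinForm F V) (hsymm : B.IsSymm)
    (T : V ≃ₗ[F] V) (hT : T ∈ isometryGroup F B)
    (p : Polynomial F) (hpm : p.Monic)
    (hmin : minpoly F ((T : V →ₗ[F] V) : Module.End F V) = p)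
    (σ : AdjoinRoot p ≃ₐ[F] AdjoinRoot p)
    (hσ : σ (AdjoinRoot.root p) * AdjoinRoot.root p = 1)
    (h : AdjoinRoot p →ₗ[F] F)
    (hhnd : ∀ a : AdjoinRoot p, (∀ b : AdjoinRoot p, h (a * b) = 0) → a = 0)
    (hhσ : ∀ e : AdjoinRoot p, h (σ e) = h e) :
    (∃! H : V → V → AdjoinRoot p,
      (∀ u u' v : V, H (u + u') v = H u v + H u' v) ∧
      (∀ f : Polynomial F, ∀ u v : V,
        H ((Polynomial.aeval ((T : V →ₗ[F] V) : Module.End F V) f) u) v =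
          AdjoinRoot.mk p f * H u v) ∧
      (∀ u v : V, h (H u v) = B u v)) ∧
    (∀ H : V → V → AdjoinRoot p,
      ((∀ u u' v : V, H (u + u') v = H u v + H u' v) ∧
       (∀ f : Polynomial F, ∀ u v : V,
         H ((Polynomial.aeval ((T : V →ₗ[F] V) : Module.End F V) f) u) v =
           AdjoinRoot.mk p f * H u v) ∧
       (∀ u v : V, h (H u v) = B u v)) →
      ∀ u v : V, H v u = σ (H u v)) := by
  set A : Module.End F V := (T : V →ₗ[F] V)
  have : FiniteDimensional F (AdjoinRoot p) := (AdjoinRoot.powerBasis' hpm).finite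
  have hh := mulForm_nondegenerate hhnd
  let ρ : AdjoinRoot p →ₐ[F] Module.End F V :=
    Ideal.Quotient.liftₐ _ (aeval A) fun a ha => by
      obtain ⟨q, rfl⟩ := Ideal.mem_span_singleton'.mp ha
      rw [map_mul, ← hmin, minpoly.aeval, mul_zero]
  have hlinear : ∀ H : V → V → AdjoinRoot p,
      (∀ f u v, H (aeval A f u) v = AdjoinRoot.mk p f * H u v) →
        ∀ e u v, H (ρ e u) v = e * H u v := by
    intro H hH e u v
    obtain ⟨f, rfl⟩ := AdjoinRoot.mk_surjective e
    exact hH f u v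
  have hadj : ∀ e, B.IsAdjointPair B (ρ (σ e)) (ρ e) :=
    isAdjointPair_of_isometry ρ B σ AdjoinRoot.adjoinRoot_eq_top hσ
      fun u v => by rw [show ρ (AdjoinRoot.root p) = A from aeval_X A]; exact hT u v
  refine ⟨⟨inducedForm hh ρ B, ⟨inducedForm_add_left hh ρ B,
      fun f => inducedForm_map_left hh ρ B (AdjoinRoot.mk p f), apply_inducedForm hh ρ B⟩,
      fun H ⟨_, hmap, hB⟩ => eq_inducedForm hh ρ B (hlinear H hmap) hB⟩, ?_⟩
  rintro H ⟨_, hmap, hB⟩ u v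
  rw [eq_inducedForm hh ρ B (hlinear H hmap) hB]
  exact inducedForm_swap hh ρ B σ hhσ hsymm hadj u v

/-- Let `T` be an isometry of a nondegenerate symmetric bilinear space whose
minimal polynomial `p` is monic, irreducible, self-dual and different from
`X ± 1`.  Let `E = F[X]/(p)` act on `V` via `[f] • v = f(T) v`, let `σ` be the
automorphism of `E` inverting the class of `X`, and let `h : E → F` be `F`-linear
with nondegenerate multiplication form and `h ∘ σ = h`.  Then there is a unique
`H : V × V → E`, additive and `E`-linear in the first variable, with
`h(H(u,v)) = B(u,v)`; and this `H` is `σ`-hermitian. -/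
theorem exists_unique_induced_hermitian_form
    (F : Type*) [Field F] (hchar : ringChar F ≠ 2)
    (V : Type*) [AddCommGroup V] [Module F V] [FiniteDimensional F V]
    (B : LinearMap.BilinForm F V) (hsymm : B.IsSymm) (hnd : B.Nondegenerate)
    (T : V ≃ₗ[F] V) (hT : T ∈ isometryGroup F B)
    (p : Polynomial F) (hpm : p.Monic) (hpi : Irreducible p)
    (hsd : dualPoly p = p) (hp1 : p ≠ Polynomial.X - 1) (hp2 : p ≠ Polynomial.X + 1)
    (hmin : minpoly F ((T : V →ₗ[F] V) : Module.End F V) = p)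
    (σ : AdjoinRoot p ≃ₐ[F] AdjoinRoot p)
    (hσ : σ (AdjoinRoot.root p) * AdjoinRoot.root p = 1)
    (h : AdjoinRoot p →ₗ[F] F)
    (hhnd : ∀ a : AdjoinRoot p, (∀ b : AdjoinRoot p, h (a * b) = 0) → a = 0)
    (hhσ : ∀ e : AdjoinRoot p, h (σ e) = h e) :
    (∃! H : V → V → AdjoinRoot p,
      (∀ u u' v : V, H (u + u') v = H u v + H u' v) ∧
      (∀ f : Polynomial F, ∀ u v : V,
        H ((Polynomial.aeval ((T : V →ₗ[F] V) : Module.End F V) f) u) v =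
          AdjoinRoot.mk p f * H u v) ∧
      (∀ u v : V, h (H u v) = B u v)) ∧
    (∀ H : V → V → AdjoinRoot p,
      ((∀ u u' v : V, H (u + u') v = H u v + H u' v) ∧
       (∀ f : Polynomial F, ∀ u v : V,
         H ((Polynomial.aeval ((T : V →ₗ[F] V) : Module.End F V) f) u) v =
           AdjoinRoot.mk p f * H u v) ∧
       (∀ u v : V, h (H u v) = B u v)) →
      ∀ u v : V, H v u = σ (H u v)) :=
  exists_unique_induced_hermitian_form_general F V B hsymm T hT p hpm hmin σ hσ h hhnd hhσ
end

section
/- Let F be a field of characteristic different from 2, (V,B) a finite-dimensional F-vector space with a nondegenerate symmetric bilinear form, and T an isometry of (V,B) whose minimal polynomial p is monic, irreducible, self-dual, and different from X − 1 and X + 1. With E = F[X]/(p) acting on V via [f]·v = f(T)(v), σ the involution of E sending the class t of X to t⁻¹, h : E → F an F-linear map with (a,b) ↦ h(ab) nondegenerate and h ∘ σ = h, and H^T the hermitian form induced by T with respect to h, the following holds: an isometry C of (V,B) commutes with T if and only if C is E-linear (C(e·v) = e·C(v) for all e ∈ E, v ∈ V) and preserves H^T (H^T(Cu,Cv) = H^T(u,v)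 for all u,v ∈ V). In other words, the centralizer of T in O(V,B) equals the unitary group U(V,H^T). -/
open Polynomial

/-- With `T`, `p`, `E = F[X]/(p)`, `σ`, `h` as in the induced-form setup, and
`H` the hermitian form induced by `T`, an isometry `C` commutes with `T` if and
only if it is `E`-linear and preserves `H`: the centralizer of `T` in `O(V,B)`
equals the unitary group `U(V, H)`. -/
theorem centralizer_eq_unitary_group
    (F : Type*) [Field F] (hchar : ringChar F ≠ 2)
    (V : Type*) [AddCommGroup V] [Module F V] [FiniteDimensional F V]
    (B : LinearMap.BilinForm F V) (hsymm : B.IsSymm) (hnd : B.Nondegenerate)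
    (T : V ≃ₗ[F] V) (hT : T ∈ isometryGroup F B)
    (p : Polynomial F) (hpm : p.Monic) (hpi : Irreducible p)
    (hsd : dualPoly p = p) (hp1 : p ≠ Polynomial.X - 1) (hp2 : p ≠ Polynomial.X + 1)
    (hmin : minpoly F ((T : V →ₗ[F] V) : Module.End F V) = p)
    (σ : AdjoinRoot p ≃ₐ[F] AdjoinRoot p)
    (hσ : σ (AdjoinRoot.root p) * AdjoinRoot.root p = 1)
    (h : AdjoinRoot p →ₗ[F] F)
    (hhnd : ∀ a : AdjoinRoot p, (∀ b : AdjoinRoot p, h (a * b) = 0) → a = 0)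
    (hhσ : ∀ e : AdjoinRoot p, h (σ e) = h e)
    (H : V → V → AdjoinRoot p)
    (Hadd : ∀ u u' v : V, H (u + u') v = H u v + H u' v)
    (Hlin : ∀ f : Polynomial F, ∀ u v : V,
      H ((Polynomial.aeval ((T : V →ₗ[F] V) : Module.End F V) f) u) v =
        AdjoinRoot.mk p f * H u v)
    (HB : ∀ u v : V, h (H u v) = B u v) :
    ∀ C ∈ isometryGroup F B,
      (C * T = T * C ↔
        ((∀ f : Polynomial F, ∀ v : V,
            C ((Polynomial.aeval ((T : V →ₗ[F] V) : Module.End F V) f) v) =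
              (Polynomial.aeval ((T : V →ₗ[F] V) : Module.End F V) f) (C v)) ∧
         (∀ u v : V, H (C u) (C v) = H u v))) := by
 
  intro C hC
  set T' : Module.End F V := ((T : V →ₗ[F] V) : Module.End F V) with hT'
  constructor
  · intro hcomm
    have hTC : ∀ v, C (T' v) = T' (C v) := fun v =>
      congrArg (fun e : V ≃ₗ[F] V => e v) hcomm
    have hpoly : ∀ f : Polynomial F, ∀ v : V,
        C ((Polynomial.aeval T' f) v) = (Polynomial.aeval T' f) (C v) := by
      intro f
      induction f using Polynomial.induction_on' with
      | add q r hq hr =>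
        intro v
        simp only [map_add, LinearMap.add_apply, map_add]
        rw [hq v, hr v]
      | monomial n a =>
        have hn : ∀ v, C ((T' ^ n) v) = (T' ^ n) (C v) := by
          induction n with
          | zero => intro v; simp
          | succ k ih =>
            intro v
            rw [pow_succ, Module.End.mul_apply, Module.End.mul_apply, ih, hTC]
        intro v
        simp only [Polynomial.aeval_monomial, Module.End.mul_apply,
          Module.algebraMap_end_apply, LinearMap.map_smul, hn]
        rw [map_smul, hn]
    refine ⟨hpoly, ?_⟩
    intro u v
    have key : ∀ a : AdjoinRoot p, h ((H (C u) (C v) - H u v) * a) = 0 := by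
      intro a
      obtain ⟨f, rfl⟩ := AdjoinRoot.mk_surjective a
      have e1 : h (AdjoinRoot.mk p f * H (C u) (C v)) =
          h (AdjoinRoot.mk p f * H u v) := by
        rw [← Hlin, ← Hlin, HB, HB, ← hpoly, hC]
      rw [sub_mul, map_sub, mul_comm, mul_comm (H u v), e1, sub_self]
    exact sub_eq_zero.mp (hhnd _ key)
  · rintro ⟨h1, -⟩
    ext v
    have h2 := h1 Polynomial.X v
    rw [Polynomial.aeval_X] at h2
    exact h2
end

section
/- Let F be a field of characteristic different from 2 and (V,B) a finite-dimensional F-vector space with a nondegenerate symmetric bilinear form. Let S and T be isometries of (V,B) having the same minimal polynomial p, where p is monic, irreducible, self-dual, and different from X − 1 and X + 1. Set E = F[X]/(p), let σ be the involution of E sending the class t of X to t⁻¹, fix an F-linear h : E → F with (a,b) ↦ h(ab) nondegenerate and h ∘ σ = h, and let H^S and H^T be the hermitian forms induced by S and by T with respect to h. Then S and T are conjugate in O(V,B) if and only if there exists an F-linear bijection C : V → V such that C ∘ f(S) = f(T) ∘ C for every polynomial f ∈ F[X] and H^T(C(u),C(v)) = H^S(u,v) for all u,v ∈ V. -/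
open Polynomial

/-- Two isometries `S`, `T` of a nondegenerate symmetric bilinear space with the
same minimal polynomial `p` (monic, irreducible, self-dual, `≠ X ± 1`) are
conjugate in `O(V,B)` if and only if their induced hermitian forms `H^S`, `H^T`
are equivalent via an `F`-linear bijection `C` intertwining `f(S)` and `f(T)`
for every polynomial `f`. -/
theorem conjugate_iff_hermitian_equivalent
    (F : Type*) [Field F] (hchar : ringChar F ≠ 2)
    (V : Type*) [AddCommGroup V] [Module F V] [FiniteDimensional F V]
    (B : LinearMap.BilinForm F V) (hsymm : B.IsSymm) (hnd : B.Nondegenerate)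
    (S T : V ≃ₗ[F] V) (hS : S ∈ isometryGroup F B) (hT : T ∈ isometryGroup F B)
    (p : Polynomial F) (hpm : p.Monic) (hpi : Irreducible p)
    (hsd : dualPoly p = p) (hp1 : p ≠ Polynomial.X - 1) (hp2 : p ≠ Polynomial.X + 1)
    (hminS : minpoly F ((S : V →ₗ[F] V) : Module.End F V) = p)
    (hminT : minpoly F ((T : V →ₗ[F] V) : Module.End F V) = p)
    (σ : AdjoinRoot p ≃ₐ[F] AdjoinRoot p)
    (hσ : σ (AdjoinRoot.root p) * AdjoinRoot.root p = 1)
    (h : AdjoinRoot p →ₗ[F] F)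
    (hhnd : ∀ a : AdjoinRoot p, (∀ b : AdjoinRoot p, h (a * b) = 0) → a = 0)
    (hhσ : ∀ e : AdjoinRoot p, h (σ e) = h e)
    (HS HT : V → V → AdjoinRoot p)
    (HSadd : ∀ u u' v : V, HS (u + u') v = HS u v + HS u' v)
    (HSlin : ∀ f : Polynomial F, ∀ u v : V,
      HS ((Polynomial.aeval ((S : V →ₗ[F] V) : Module.End F V) f) u) v =
        AdjoinRoot.mk p f * HS u v)
    (HSB : ∀ u v : V, h (HS u v) = B u v)
    (HTadd : ∀ u u' v : V, HT (u + u') v = HT u v + HT u' v)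
    (HTlin : ∀ f : Polynomial F, ∀ u v : V,
      HT ((Polynomial.aeval ((T : V →ₗ[F] V) : Module.End F V) f) u) v =
        AdjoinRoot.mk p f * HT u v)
    (HTB : ∀ u v : V, h (HT u v) = B u v) :
    (∃ C ∈ isometryGroup F B, C * S * C⁻¹ = T) ↔
    (∃ C : V ≃ₗ[F] V,
      (∀ f : Polynomial F, ∀ v : V,
        C ((Polynomial.aeval ((S : V →ₗ[F] V) : Module.End F V) f) v) =
          (Polynomial.aeval ((T : V →ₗ[F] V) : Module.End F V) f) (C v)) ∧
      (∀ u v : V, HT (C u) (C v) = HS u v)) := by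
  constructor
  · rintro ⟨C, hC, hCT⟩
    have hbase : ∀ v : V, C (S v) = T (C v) := by
      intro v
      conv_rhs => rw [← hCT]
      show C (S v) = C (S (C.symm (C v)))
      rw [C.symm_apply_apply]
    have hpow : ∀ (n : ℕ) (v : V),
        C ((((S : V →ₗ[F] V) : Module.End F V) ^ n) v) =
          ((((T : V →ₗ[F] V) : Module.End F V) ^ n)) (C v) := by
      intro n
      induction n with
      | zero => intro v; simp
      | succ n ih =>
        intro v
        rw [pow_succ, pow_succ, Module.End.mul_apply, Module.End.mul_apply]
        simp only [LinearEquiv.coe_coe]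
        rw [ih (S v), hbase v]
    have hcomm : ∀ (f : Polynomial F) (v : V),
        C ((Polynomial.aeval ((S : V →ₗ[F] V) : Module.End F V) f) v) =
          (Polynomial.aeval ((T : V →ₗ[F] V) : Module.End F V) f) (C v) := by
      intro f
      induction f using Polynomial.induction_on' with
      | add f g hf hg =>
        intro v
        simp only [map_add, LinearMap.add_apply]
        rw [hf, hg]
      | monomial n a =>
        intro v
        simp only [Polynomial.aeval_monomial, Module.End.mul_apply,
          Module.algebraMap_end_apply, map_smul]
        rw [hpow n v]
    refine ⟨C, hcomm, ?_⟩
    intro u v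
    have key : ∀ b : AdjoinRoot p, h ((HT (C u) (C v) - HS u v) * b) = 0 := by
      intro b
      obtain ⟨f, rfl⟩ := AdjoinRoot.mk_surjective b
      have e1 : h (AdjoinRoot.mk p f * HT (C u) (C v)) =
          h (AdjoinRoot.mk p f * HS u v) := by
        rw [← HTlin f (C u) (C v), ← HSlin f u v, HTB, HSB, ← hcomm f u, hC]
      rw [sub_mul, map_sub, mul_comm (HT (C u) (C v)), mul_comm (HS u v), e1,
        sub_self]
    exact sub_eq_zero.mp (hhnd _ key)
  · rintro ⟨C, hcomm, hherm⟩
    have hCiso : C ∈ isometryGroup F B := by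
      intro u v
      rw [← HTB (C u) (C v), hherm, HSB]
    refine ⟨C, hCiso, ?_⟩
    ext v
    have hx := hcomm Polynomial.X (C⁻¹ v)
    simp only [Polynomial.aeval_X, LinearEquiv.coe_coe] at hx
    show C (S (C⁻¹ v)) = T v
    rw [hx]
    congr 1
    exact C.apply_symm_apply v
end
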